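/- Let 0 < a ≤ b and E = {ξ ∈ ℝ^{2×2} : λ₁(ξ) = a, λ₂(ξ) = b}. If ξ is a 2×2 matrix with λ₂(ξ) = b and λ₁(ξ) ≤ a, then ξ belongs to the rank-one convex hull of E; specifically, the diagonal matrix diag(x, b) with |x| ≤ a is a convex combination of diag(a,b) and diag(−a,b), whose difference has rank one. -/
import Mathlib


/-- Frobenius norm squared of a 2×2 real matrix. -/
noncomputable def frobSq (ξ : Matrix (Fin 2) (Fin 2) ℝ) : ℝ := ∑ i, ∑ j, (ξ i j) ^ 2

/-- The smaller singular value `λ₁(ξ)` of a 2×2 real matrix. -/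
noncomputable def lam1 (ξ : Matrix (Fin 2) (Fin 2) ℝ) : ℝ :=
  (Real.sqrt (frobSq ξ + 2 * |ξ.det|) - Real.sqrt (frobSq ξ - 2 * |ξ.det|)) / 2

/-- The larger singular value `λ₂(ξ)` of a 2×2 real matrix. -/
noncomputable def lam2 (ξ : Matrix (Fin 2) (Fin 2) ℝ) : ℝ :=
  (Real.sqrt (frobSq ξ + 2 * |ξ.det|) + Real.sqrt (frobSq ξ - 2 * |ξ.det|)) / 2

/-- Iterated rank-one hulls: `R₀co E = E` and `R_{i+1}co E` consists of the rank-one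
convex combinations of elements of `R_i co E`. -/
def Rn : ℕ → Set (Matrix (Fin 2) (Fin 2) ℝ) → Set (Matrix (Fin 2) (Fin 2) ℝ)
  | 0, E => E
  | n + 1, E => {ξ | ∃ A ∈ Rn n E, ∃ B ∈ Rn n E, (A - B).rank ≤ 1 ∧
      ∃ t ∈ Set.Icc (0 : ℝ) 1, ξ = t • A + (1 - t) • B}

/-- The (laminate) rank-one convex hull `Rco E = ⋃ᵢ R_i co E`. -/
def Rco (E : Set (Matrix (Fin 2) (Fin 2) ℝ)) : Set (Matrix (Fin 2) (Fin 2) ℝ) :=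
  ⋃ n, Rn n E

lemma rank_le_one_of_det (M : Matrix (Fin 2) (Fin 2) ℝ) (h : M.det = 0) : M.rank ≤ 1 := by
  obtain ⟨v, hMv, hv⟩ := Matrix.exists_mulVec_eq_zero_iff.2 h
  have hk : 0 < Module.finrank ℝ (LinearMap.ker M.mulVecLin) := by
    have : Nontrivial (LinearMap.ker M.mulVecLin) := by
      refine nontrivial_of_ne ⟨v, ?_⟩ 0 ?_
      · simpa using hv
      · simpa using hMv
    exact Module.finrank_pos
  have hsum := LinearMap.finrank_range_add_finrank_ker M.mulVecLin
  have h2 : Module.finrank ℝ (Fin 2 → ℝ) = 2 := by simp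
  rw [Matrix.rank]
  omega

lemma lam_conf (α β γ δ : ℝ) :
    lam1 !![α + γ, δ - β; β + δ, α - γ] =
      |Real.sqrt (α ^ 2 + β ^ 2) - Real.sqrt (γ ^ 2 + δ ^ 2)| ∧
    lam2 !![α + γ, δ - β; β + δ, α - γ] =
      Real.sqrt (α ^ 2 + β ^ 2) + Real.sqrt (γ ^ 2 + δ ^ 2) := by
  set M := !![α + γ, δ - β; β + δ, α - γ] with hM
  set m := Real.sqrt (α ^ 2 + β ^ 2) with hmdef
  set n := Real.sqrt (γ ^ 2 + δ ^ 2) with hndef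
  have hm : 0 ≤ m := Real.sqrt_nonneg _
  have hn : 0 ≤ n := Real.sqrt_nonneg _
  have hm2 : m ^ 2 = α ^ 2 + β ^ 2 := Real.sq_sqrt (by positivity)
  have hn2 : n ^ 2 = γ ^ 2 + δ ^ 2 := Real.sq_sqrt (by positivity)
  have hF : frobSq M = 2 * (m ^ 2 + n ^ 2) := by
    simp [frobSq, hM, Fin.sum_univ_two]
    linarith [hm2, hn2]
  have hD : M.det = m ^ 2 - n ^ 2 := by
    rw [hM, Matrix.det_fin_two_of]
    linarith [hm2, hn2]
  have habs : |M.det| = |m - n| * (m + n) := by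
    rw [hD, show m ^ 2 - n ^ 2 = (m - n) * (m + n) by ring, abs_mul,
      abs_of_nonneg (show (0:ℝ) ≤ m + n by linarith)]
  have h1 : Real.sqrt (frobSq M + 2 * |M.det|) = (m + n) + |m - n| := by
    rw [hF, habs, show 2 * (m ^ 2 + n ^ 2) + 2 * (|m - n| * (m + n)) = ((m + n) + |m - n|) ^ 2 by
      linear_combination -sq_abs (m - n)]
    exact Real.sqrt_sq (by positivity)
  have hle : |m - n| ≤ m + n := abs_le.2 ⟨by linarith, by linarith⟩
  have h2 : Real.sqrt (frobSq M - 2 * |M.det|) = (m + n) - |m - n| := by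
    rw [hF, habs, show 2 * (m ^ 2 + n ^ 2) - 2 * (|m - n| * (m + n)) = ((m + n) - |m - n|) ^ 2 by
      linear_combination -sq_abs (m - n)]
    exact Real.sqrt_sq (by linarith)
  constructor
  · rw [lam1, h1, h2]; ring
  · rw [lam2, h1, h2]; ring

lemma smul_fin2 (t a b c d : ℝ) :
    t • (!![a, b; c, d] : Matrix (Fin 2) (Fin 2) ℝ) = !![t * a, t * b; t * c, t * d] := by
  ext i j
  fin_cases i <;> fin_cases j <;> simp

lemma add_fin2 (a b c d e f g h : ℝ) :
    (!![a, b; c, d] : Matrix (Fin 2) (Fin 2) ℝ) + !![e, f; g, h] =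
      !![a + e, b + f; c + g, d + h] := by
  ext i j
  fin_cases i <;> fin_cases j <;> simp

lemma sub_fin2 (a b c d e f g h : ℝ) :
    (!![a, b; c, d] : Matrix (Fin 2) (Fin 2) ℝ) - !![e, f; g, h] =
      !![a - e, b - f; c - g, d - h] := by
  ext i j
  fin_cases i <;> fin_cases j <;> simp

lemma eta_fin2 (a b c d e f g h : ℝ) (h1 : a = e) (h2 : b = f) (h3 : c = g) (h4 : d = h) :
    (!![a, b; c, d] : Matrix (Fin 2) (Fin 2) ℝ) = !![e, f; g, h] := by
  rw [h1, h2, h3, h4]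

lemma diag_fin2 (a b : ℝ) :
    (Matrix.diagonal ![a, b] : Matrix (Fin 2) (Fin 2) ℝ) = !![a, 0; 0, b] := by
  ext i j
  fin_cases i <;> fin_cases j <;> simp [Matrix.diagonal]

set_option maxHeartbeats 1600000 in
theorem mem_Rco_of_lam2_eq (a b : ℝ) (ha : 0 < a) (hab : a ≤ b) :
    (∀ ξ : Matrix (Fin 2) (Fin 2) ℝ, lam2 ξ = b → lam1 ξ ≤ a →
      ξ ∈ Rco {η | lam1 η = a ∧ lam2 η = b}) ∧
    (∀ x : ℝ, |x| ≤ a →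
      (!![a, 0; 0, b] - !![-a, 0; 0, b]).rank = 1 ∧
      ∃ t ∈ Set.Icc (0 : ℝ) 1,
        !![x, 0; 0, b] = t • !![a, 0; 0, b] + (1 - t) • !![-a, 0; 0, b]) := by
  constructor
  · intro ξ hl2 hl1
    obtain ⟨α, β, γ, δ, hξ⟩ :
        ∃ α β γ δ : ℝ, ξ = !![α + γ, δ - β; β + δ, α - γ] := by
      refine ⟨(ξ 0 0 + ξ 1 1) / 2, (ξ 1 0 - ξ 0 1) / 2, (ξ 0 0 - ξ 1 1) / 2,
        (ξ 0 1 + ξ 1 0) / 2, ?_⟩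
      ext i j
      fin_cases i <;> fin_cases j <;> simp <;> ring
    obtain ⟨m, n, hm, hn, hm2, hn2, l1, l2⟩ :
        ∃ m n : ℝ, 0 ≤ m ∧ 0 ≤ n ∧ m ^ 2 = α ^ 2 + β ^ 2 ∧ n ^ 2 = γ ^ 2 + δ ^ 2 ∧
          lam1 ξ = |m - n| ∧ lam2 ξ = m + n := by
      refine ⟨Real.sqrt (α ^ 2 + β ^ 2), Real.sqrt (γ ^ 2 + δ ^ 2), Real.sqrt_nonneg _,
        Real.sqrt_nonneg _, Real.sq_sqrt (by positivity), Real.sq_sqrt (by positivity), ?_, ?_⟩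
      · rw [hξ]; exact (lam_conf α β γ δ).1
      · rw [hξ]; exact (lam_conf α β γ δ).2
    have hmn : m + n = b := by rw [← hl2, l2]
    have hd : |m - n| ≤ a := l1 ▸ hl1
    have hd1 : -a ≤ m - n := (abs_le.1 hd).1
    have hd2 : m - n ≤ a := (abs_le.1 hd).2
    obtain ⟨u1, u2, hu, hαm, hβm⟩ :
        ∃ u1 u2 : ℝ, u1 ^ 2 + u2 ^ 2 = 1 ∧ α = m * u1 ∧ β = m * u2 := by
      by_cases h : m = 0
      · have hα0 : α = 0 := by nlinarith [hm2, sq_nonneg α, sq_nonneg β]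
        have hβ0 : β = 0 := by nlinarith [hm2, sq_nonneg α, sq_nonneg β]
        exact ⟨1, 0, by norm_num, by rw [hα0, h]; ring, by rw [hβ0, h]; ring⟩
      · refine ⟨α / m, β / m, ?_, by field_simp, by field_simp⟩
        field_simp
        linarith [hm2]
    obtain ⟨v1, v2, hv, hγn, hδn⟩ :
        ∃ v1 v2 : ℝ, v1 ^ 2 + v2 ^ 2 = 1 ∧ γ = n * v1 ∧ δ = n * v2 := by
      by_cases h : n = 0
      · have hγ0 : γ = 0 := by nlinarith [hn2, sq_nonneg γ, sq_nonneg δ]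
        have hδ0 : δ = 0 := by nlinarith [hn2, sq_nonneg γ, sq_nonneg δ]
        exact ⟨1, 0, by norm_num, by rw [hγ0, h]; ring, by rw [hδ0, h]; ring⟩
      · refine ⟨γ / n, δ / n, ?_, by field_simp, by field_simp⟩
        field_simp
        linarith [hn2]
    obtain ⟨p, hpdef⟩ : ∃ p : ℝ, p = (a + b) / 2 := ⟨_, rfl⟩
    obtain ⟨q, hqdef⟩ : ∃ q : ℝ, q = (b - a) / 2 := ⟨_, rfl⟩
    have hp : 0 ≤ p := by rw [hpdef]; linarith
    have hq : 0 ≤ q := by rw [hqdef]; linarith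
    obtain ⟨A, hAdef⟩ : ∃ A : Matrix (Fin 2) (Fin 2) ℝ,
        A = !![p * u1 + q * v1, q * v2 - p * u2; p * u2 + q * v2, p * u1 - q * v1] := ⟨_, rfl⟩
    obtain ⟨B, hBdef⟩ : ∃ B : Matrix (Fin 2) (Fin 2) ℝ,
        B = !![q * u1 + p * v1, p * v2 - q * u2; q * u2 + p * v2, q * u1 - p * v1] := ⟨_, rfl⟩
    have hpu : Real.sqrt ((p * u1) ^ 2 + (p * u2) ^ 2) = p := by
      rw [show (p * u1) ^ 2 + (p * u2) ^ 2 = p ^ 2 by linear_combination p ^ 2 * hu]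
      exact Real.sqrt_sq hp
    have hqu : Real.sqrt ((q * u1) ^ 2 + (q * u2) ^ 2) = q := by
      rw [show (q * u1) ^ 2 + (q * u2) ^ 2 = q ^ 2 by linear_combination q ^ 2 * hu]
      exact Real.sqrt_sq hq
    have hpv : Real.sqrt ((p * v1) ^ 2 + (p * v2) ^ 2) = p := by
      rw [show (p * v1) ^ 2 + (p * v2) ^ 2 = p ^ 2 by linear_combination p ^ 2 * hv]
      exact Real.sqrt_sq hp
    have hqv : Real.sqrt ((q * v1) ^ 2 + (q * v2) ^ 2) = q := by
      rw [show (q * v1) ^ 2 + (q * v2) ^ 2 = q ^ 2 by linear_combination q ^ 2 * hv]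
      exact Real.sqrt_sq hq
    obtain ⟨lA1, lA2⟩ := lam_conf (p * u1) (p * u2) (q * v1) (q * v2)
    rw [hpu, hqv, ← hAdef] at lA1 lA2
    obtain ⟨lB1, lB2⟩ := lam_conf (q * u1) (q * u2) (p * v1) (p * v2)
    rw [hqu, hpv, ← hBdef] at lB1 lB2
    have hA1 : lam1 A = a := by
      rw [lA1, show p - q = a by rw [hpdef, hqdef]; ring, abs_of_pos ha]
    have hA2 : lam2 A = b := by rw [lA2, hpdef, hqdef]; ring
    have hB1 : lam1 B = a := by
      rw [lB1, show q - p = -a by rw [hpdef, hqdef]; ring, abs_neg, abs_of_pos ha]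
    have hB2 : lam2 B = b := by rw [lB2, hpdef, hqdef]; ring
    have hdet : (A - B).det = 0 := by
      rw [hAdef, hBdef, sub_fin2, Matrix.det_fin_two_of]
      linear_combination (p - q) ^ 2 * hu - (p - q) ^ 2 * hv
    obtain ⟨t, htdef⟩ : ∃ t : ℝ, t = (m - n + a) / (2 * a) := ⟨_, rfl⟩
    have ht0 : 0 ≤ t := by
      rw [htdef]
      exact div_nonneg (by linarith) (by linarith)
    have ht1 : t ≤ 1 := by
      rw [htdef, div_le_one (by linarith)]; linarith
    have htp : t * p + (1 - t) * q = m := by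
      rw [htdef, hpdef, hqdef]
      field_simp
      linear_combination (-2 * a) * hmn
    have htq : t * q + (1 - t) * p = n := by
      rw [htdef, hpdef, hqdef]
      field_simp
      linear_combination (-2 * a) * hmn
    have hcomb : ξ = t • A + (1 - t) • B := by
      rw [hξ, hAdef, hBdef, smul_fin2, smul_fin2, add_fin2]
      refine eta_fin2 _ _ _ _ _ _ _ _ ?_ ?_ ?_ ?_
      · linear_combination hαm + hγn - u1 * htp - v1 * htq
      · linear_combination hδn - hβm - v2 * htq + u2 * htp
      · linear_combination hβm + hδn - u2 * htp - v2 * htq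
      · linear_combination hαm - hγn - u1 * htp + v1 * htq
    have h1 : ξ ∈ Rn 1 {η | lam1 η = a ∧ lam2 η = b} := by
      rw [Rn]
      exact ⟨A, ⟨hA1, hA2⟩, B, ⟨hB1, hB2⟩, rank_le_one_of_det _ hdet, t, ⟨ht0, ht1⟩, hcomb⟩
    exact Set.mem_iUnion.2 ⟨1, h1⟩
  · intro x hx
    constructor
    · have hsub : !![a, 0; 0, b] - !![-a, 0; 0, b] = Matrix.diagonal ![2 * a, 0] := by
        rw [sub_fin2, diag_fin2]
        refine eta_fin2 _ _ _ _ _ _ _ _ (by ring) (by ring) (by ring) (by ring)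
      rw [hsub, Matrix.rank_diagonal]
      refine Fintype.card_eq_one_iff.2
        ⟨⟨0, by simpa using (by positivity : (0:ℝ) < 2 * a).ne'⟩, ?_⟩
      rintro ⟨i, hi⟩
      fin_cases i
      · rfl
      · simp at hi
    · have hx1 := (abs_le.1 hx).1
      have hx2 := (abs_le.1 hx).2
      refine ⟨(x + a) / (2 * a), ⟨div_nonneg (by linarith) (by linarith),
        (div_le_one (by linarith)).2 (by linarith)⟩, ?_⟩
      rw [smul_fin2, smul_fin2, add_fin2]
      refine eta_fin2 _ _ _ _ _ _ _ _ ?_ (by ring) (by ring) (by ring)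
      field_simp
      ring
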